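/- Let α > 0, let Φ : (0,α] → ℝ be continuous, and set u* = Φ(α). Let G be the kernel associated with α and Φ. Then G(θ)/√(1−θ) → √(2/π) · u*/α as θ → 1⁻. -/

import Mathlib

/-! The substitution `ζ = α (θ + (1 - θ) t)` maps `t ∈ (0, 1]` onto `ζ ∈ (αθ, α]` and turns
`ζ² - α²θ²` into `α² (1 - θ) t (2θ + (1 - θ) t)`, so the Jacobian `α (1 - θ)` leaves exactly a
factor `√(1 - θ)` in front of the rescaled integral. As `θ → 1⁻` the rescaled integrand tends to
`Φ(α) / (α² √(2t))`, and for `θ > 1/2` it is dominated by a multiple of `1 / √t`; dominated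
convergence then gives the limit `(α / √π) · √2 · Φ(α) / α²`. -/

open MeasureTheory Set Filter Topology

/-- The kernel G associated with α and Φ:
G(θ) = (α/√π) ∫_{α|θ|}^{α} (ζ² - α²θ²)^{-1/2}
         exp(-α²ζ²(1-θ)²/(4(ζ² - α²θ²))) Φ(ζ)/ζ² dζ. -/
noncomputable def kernelG (α : ℝ) (Φ : ℝ → ℝ) (θ : ℝ) : ℝ :=
  (α / Real.sqrt Real.pi) *
    ∫ ζ in (α * |θ|)..α,
      (1 / Real.sqrt (ζ ^ 2 - α ^ 2 * θ ^ 2)) *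
        Real.exp (-(α ^ 2 * ζ ^ 2 * (1 - θ) ^ 2) / (4 * (ζ ^ 2 - α ^ 2 * θ ^ 2))) *
        (Φ ζ / ζ ^ 2)

namespace KernelG

noncomputable def integrand (α : ℝ) (ψ : ℝ → ℝ) (θ ζ : ℝ) : ℝ :=
  1 / √(ζ ^ 2 - α ^ 2 * θ ^ 2) *
    Real.exp (-(α ^ 2 * ζ ^ 2 * (1 - θ) ^ 2) / (4 * (ζ ^ 2 - α ^ 2 * θ ^ 2))) * ψ ζ

noncomputable def rescaledIntegrand (α : ℝ) (ψ : ℝ → ℝ) (θ t : ℝ) : ℝ :=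
  1 / √(t * (2 * θ + (1 - θ) * t)) *
    Real.exp (-(α ^ 2 * (θ + (1 - θ) * t) ^ 2 * (1 - θ)) / (4 * (t * (2 * θ + (1 - θ) * t)))) *
    ψ (α * (θ + (1 - θ) * t))

variable {α θ t : ℝ}

lemma add_mul_mem_Ioc (hθ : θ < 1) (ht : t ∈ Ioc 0 1) : θ + (1 - θ) * t ∈ Ioc θ 1 := by
  constructor <;> nlinarith [ht.1, ht.2]

lemma mul_add_mul_mem_Ioc (hα : 0 < α) (hθ : θ < 1) (ht : t ∈ Ioc 0 1) :
    α * (θ + (1 - θ) * t) ∈ Ioc (α * θ) α := by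
  obtain ⟨hlt, hle⟩ := add_mul_mem_Ioc hθ ht
  exact ⟨mul_lt_mul_of_pos_left hlt hα, mul_le_of_le_one_right hα.le hle⟩

lemma le_mul_two_add (hθ : 1 / 2 ≤ θ) (hθ1 : θ ≤ 1) (ht : 0 ≤ t) :
    t ≤ t * (2 * θ + (1 - θ) * t) := by
  nlinarith [mul_nonneg (mul_nonneg (sub_nonneg.2 hθ1) ht) ht]

lemma mul_two_add_pos (hθ : θ ∈ Ioo 0 1) (ht : 0 < t) : 0 < t * (2 * θ + (1 - θ) * t) := by
  have := hθ.1; have := hθ.2; positivity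

lemma integrand_affine (hα : 0 < α) (ψ : ℝ → ℝ) (hθ : θ ∈ Ioo 0 1) (ht : 0 < t) :
    integrand α ψ θ (α * (1 - θ) * t + α * θ)
      = 1 / (α * √(1 - θ)) * rescaledIntegrand α ψ θ t := by
  have h1θ : 0 < 1 - θ := sub_pos.2 hθ.2
  have hB := mul_two_add_pos hθ ht
  have hu : α * (1 - θ) * t + α * θ = α * (θ + (1 - θ) * t) := by ring
  have hdiff : (α * (θ + (1 - θ) * t)) ^ 2 - α ^ 2 * θ ^ 2
      = α ^ 2 * (1 - θ) * (t * (2 * θ + (1 - θ) * t)) := by ring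
  have hsqrt : √(α ^ 2 * (1 - θ) * (t * (2 * θ + (1 - θ) * t)))
      = α * √(1 - θ) * √(t * (2 * θ + (1 - θ) * t)) := by
    rw [Real.sqrt_mul (by positivity), Real.sqrt_mul (by positivity), Real.sqrt_sq hα.le]
  have hexp : -(α ^ 2 * (α * (θ + (1 - θ) * t)) ^ 2 * (1 - θ) ^ 2)
        / (4 * (α ^ 2 * (1 - θ) * (t * (2 * θ + (1 - θ) * t))))
      = -(α ^ 2 * (θ + (1 - θ) * t) ^ 2 * (1 - θ)) / (4 * (t * (2 * θ + (1 - θ) * t))) := by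
    field_simp
  rw [integrand, rescaledIntegrand, hu, hdiff, hsqrt, hexp]
  field_simp

lemma integral_integrand_eq (hα : 0 < α) (ψ : ℝ → ℝ) (hθ : θ ∈ Ioo 0 1) :
    ∫ ζ in (α * θ)..α, integrand α ψ θ ζ
      = √(1 - θ) * ∫ t in Ioc 0 1, rescaledIntegrand α ψ θ t := by
  have h1θ : 0 < 1 - θ := sub_pos.2 hθ.2
  have hc : α * (1 - θ) ≠ 0 := by positivity
  have hsubst :=
    intervalIntegral.integral_comp_mul_add (integrand α ψ θ) hc (α * θ) (a := 0) (b := 1)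
  rw [show α * (1 - θ) * 0 + α * θ = α * θ by ring, show α * (1 - θ) * 1 + α * θ = α by ring,
    intervalIntegral.integral_of_le zero_le_one,
    setIntegral_congr_fun measurableSet_Ioc fun t ht => integrand_affine hα ψ hθ ht.1,
    integral_const_mul, eq_inv_smul_iff₀ hc, smul_eq_mul] at hsubst
  rw [← hsubst]
  field_simp
  rw [Real.sq_sqrt h1θ.le]

lemma kernelG_div_sqrt_eq (hα : 0 < α) (Φ : ℝ → ℝ) (hθ : θ ∈ Ioo 0 1) :
    kernelG α Φ θ / √(1 - θ)
      = α / √Real.pi * ∫ t in Ioc 0 1, rescaledIntegrand α (fun ζ => Φ ζ / ζ ^ 2) θ t := by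
  have hs : √(1 - θ) ≠ 0 := (Real.sqrt_pos.2 (sub_pos.2 hθ.2)).ne'
  have hG : kernelG α Φ θ
      = α / √Real.pi * ∫ ζ in (α * θ)..α, integrand α (fun ζ => Φ ζ / ζ ^ 2) θ ζ := by
    rw [kernelG, abs_of_pos hθ.1]; rfl
  rw [hG, integral_integrand_eq hα _ hθ]
  field_simp

lemma continuousOn_rescaledIntegrand (hα : 0 < α) {ψ : ℝ → ℝ} (hψ : ContinuousOn ψ (Ioc 0 α))
    (hθ : θ ∈ Ioo 0 1) : ContinuousOn (rescaledIntegrand α ψ θ) (Ioc 0 1) := by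
  have hB : ∀ t ∈ Ioc (0 : ℝ) 1, 0 < t * (2 * θ + (1 - θ) * t) :=
    fun t ht => mul_two_add_pos hθ ht.1
  have hmaps : MapsTo (fun t => α * (θ + (1 - θ) * t)) (Ioc 0 1) (Ioc 0 α) := fun t ht =>
    Ioc_subset_Ioc_left (by have := hθ.1; positivity) (mul_add_mul_mem_Ioc hα hθ.2 ht)
  have hsqrt : ContinuousOn (fun t => 1 / √(t * (2 * θ + (1 - θ) * t))) (Ioc 0 1) :=
    continuousOn_const.div (by fun_prop) fun t ht => (Real.sqrt_pos.2 (hB t ht)).ne'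
  have hexp : ContinuousOn (fun t => Real.exp (-(α ^ 2 * (θ + (1 - θ) * t) ^ 2 * (1 - θ)) /
      (4 * (t * (2 * θ + (1 - θ) * t))))) (Ioc 0 1) :=
    (ContinuousOn.div (by fun_prop) (by fun_prop) fun t ht => by have := hB t ht; positivity).rexp
  exact (hsqrt.mul hexp).mul (hψ.comp (by fun_prop) hmaps)

lemma tendsto_rescaledIntegrand (hα : 0 < α) {ψ : ℝ → ℝ}
    (hψ : ContinuousWithinAt ψ (Ioc 0 α) α) (ht : t ∈ Ioc 0 1) :
    Tendsto (fun θ => rescaledIntegrand α ψ θ t) (𝓝[<] 1) (𝓝 (1 / √(2 * t) * ψ α)) := by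
  have hB : ContinuousAt (fun θ => t * (2 * θ + (1 - θ) * t)) 1 := by fun_prop
  have hB1 : t * (2 * 1 + (1 - 1) * t) = 2 * t := by ring
  have hB1_pos : 0 < t * (2 * 1 + (1 - 1) * t) := by rw [hB1]; exact mul_pos two_pos ht.1
  have hfactor : ContinuousAt (fun θ => 1 / √(t * (2 * θ + (1 - θ) * t)) *
      Real.exp (-(α ^ 2 * (θ + (1 - θ) * t) ^ 2 * (1 - θ)) /
        (4 * (t * (2 * θ + (1 - θ) * t))))) 1 :=
    (continuousAt_const.div hB.sqrt (Real.sqrt_pos.2 hB1_pos).ne').mul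
      ((ContinuousAt.div (by fun_prop) (continuousAt_const.mul hB)
        (mul_ne_zero four_ne_zero hB1_pos.ne')).rexp)
  have hfactor_lim := hfactor.tendsto.mono_left (nhdsWithin_le_nhds (s := Iio 1))
  rw [hB1] at hfactor_lim
  simp only [sub_self, mul_zero, neg_zero, zero_div, Real.exp_zero, mul_one] at hfactor_lim
  have hζ : Tendsto (fun θ => α * (θ + (1 - θ) * t)) (𝓝[<] 1) (𝓝[Ioc 0 α] α) := by
    refine tendsto_nhdsWithin_iff.2 ⟨?_, ?_⟩
    · have hcont : ContinuousAt (fun θ => α * (θ + (1 - θ) * t)) 1 := by fun_prop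
      simpa using hcont.tendsto.mono_left (nhdsWithin_le_nhds (s := Iio 1))
    · filter_upwards [Ioo_mem_nhdsLT zero_lt_one] with θ hθ
      exact Ioc_subset_Ioc_left (by have := hθ.1; positivity) (mul_add_mul_mem_Ioc hα hθ.2 ht)
  exact hfactor_lim.mul (hψ.tendsto.comp hζ)

lemma norm_rescaledIntegrand_le (hα : 0 < α) {ψ : ℝ → ℝ} {M : ℝ}
    (hM : ∀ ζ ∈ Icc (α / 2) α, ‖ψ ζ‖ ≤ M) (hθ : θ ∈ Ioo (1 / 2) 1) (ht : t ∈ Ioc 0 1) :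
    ‖rescaledIntegrand α ψ θ t‖ ≤ M * (1 / √t) := by
  have hθ' : θ ∈ Ioo 0 1 := ⟨by linarith [hθ.1], hθ.2⟩
  have hB := mul_two_add_pos hθ' ht.1
  have hsqrt : ‖1 / √(t * (2 * θ + (1 - θ) * t))‖ ≤ 1 / √t := by
    rw [Real.norm_of_nonneg (by positivity)]
    exact one_div_le_one_div_of_le (Real.sqrt_pos.2 ht.1)
      (Real.sqrt_le_sqrt (le_mul_two_add hθ.1.le hθ.2.le ht.1.le))
  have hexp : ‖Real.exp (-(α ^ 2 * (θ + (1 - θ) * t) ^ 2 * (1 - θ)) /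
      (4 * (t * (2 * θ + (1 - θ) * t))))‖ ≤ 1 := by
    rw [Real.norm_of_nonneg (Real.exp_pos _).le, Real.exp_le_one_iff]
    have := hθ'.2
    exact div_nonpos_of_nonpos_of_nonneg (neg_nonpos.2 (by positivity)) (by positivity)
  have hψ : ‖ψ (α * (θ + (1 - θ) * t))‖ ≤ M := by
    obtain ⟨hlt, hle⟩ := mul_add_mul_mem_Ioc hα hθ.2 ht
    exact hM _ ⟨by nlinarith [hθ.1], hle⟩
  calc ‖rescaledIntegrand α ψ θ t‖
      ≤ 1 / √t * 1 * M := by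
        rw [rescaledIntegrand, norm_mul, norm_mul]
        gcongr
    _ = M * (1 / √t) := by ring

lemma one_div_sqrt_eq_rpow (ht : 0 ≤ t) : 1 / √t = t ^ (-(1 / 2 : ℝ)) := by
  rw [Real.sqrt_eq_rpow, Real.rpow_neg ht, one_div]

lemma integrableOn_one_div_sqrt : IntegrableOn (fun t => 1 / √t) (Ioc 0 1) := by
  refine (IntegrableOn.congr_fun ?_ (fun t ht => (one_div_sqrt_eq_rpow ht.1.le).symm)
    measurableSet_Ioc)
  exact (intervalIntegrable_iff_integrableOn_Ioc_of_le zero_le_one).1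
    (intervalIntegral.intervalIntegrable_rpow' (by norm_num))

lemma integral_one_div_sqrt_two_mul : ∫ t in Ioc 0 1, 1 / √(2 * t) = √2 := by
  have hrpow : ∫ t in Ioc (0 : ℝ) 1, t ^ (-(1 / 2 : ℝ)) = 2 := by
    rw [← intervalIntegral.integral_of_le zero_le_one, integral_rpow (Or.inl (by norm_num))]
    norm_num
  calc ∫ t in Ioc 0 1, 1 / √(2 * t)
      = ∫ t in Ioc 0 1, 1 / √2 * t ^ (-(1 / 2 : ℝ)) :=
        setIntegral_congr_fun measurableSet_Ioc fun t ht => by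
          rw [← one_div_sqrt_eq_rpow ht.1.le, Real.sqrt_mul zero_le_two, one_div_mul_one_div]
    _ = √2 := by
        rw [integral_const_mul, hrpow]
        have := Real.sq_sqrt (zero_le_two (α := ℝ))
        field_simp
        linarith

lemma tendsto_integral_rescaledIntegrand (hα : 0 < α) {ψ : ℝ → ℝ}
    (hψ : ContinuousOn ψ (Ioc 0 α)) :
    Tendsto (fun θ => ∫ t in Ioc 0 1, rescaledIntegrand α ψ θ t) (𝓝[<] 1) (𝓝 (√2 * ψ α)) := by
  obtain ⟨M, hM⟩ := (isCompact_Icc (a := α / 2) (b := α)).exists_bound_of_continuousOn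
    (hψ.mono (Icc_subset_Ioc_iff (by linarith) |>.2 ⟨by linarith, le_rfl⟩))
  have hlim : ∫ t in Ioc 0 1, 1 / √(2 * t) * ψ α = √2 * ψ α := by
    rw [integral_mul_const, integral_one_div_sqrt_two_mul]
  rw [← hlim]
  refine tendsto_integral_filter_of_dominated_convergence (fun t => M * (1 / √t)) ?_ ?_
    (integrableOn_one_div_sqrt.const_mul M) ?_
  · filter_upwards [Ioo_mem_nhdsLT zero_lt_one] with θ hθ
    exact (continuousOn_rescaledIntegrand hα hψ hθ).aestronglyMeasurable measurableSet_Ioc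
  · filter_upwards [Ioo_mem_nhdsLT (by norm_num : (1 / 2 : ℝ) < 1)] with θ hθ
    exact (ae_restrict_iff' measurableSet_Ioc).2 <|
      Eventually.of_forall fun t ht => norm_rescaledIntegrand_le hα hM hθ ht
  · exact (ae_restrict_iff' measurableSet_Ioc).2 <| Eventually.of_forall fun t ht =>
      tendsto_rescaledIntegrand hα (hψ α (right_mem_Ioc.2 hα)) ht

end KernelG

open KernelG in
theorem kernelG_asymptotics_at_one
    (α : ℝ) (hα : 0 < α) (Φ : ℝ → ℝ) (hΦ : ContinuousOn Φ (Ioc 0 α)) :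
    Tendsto (fun θ => kernelG α Φ θ / Real.sqrt (1 - θ))
      (nhdsWithin 1 (Iio 1))
      (nhds (Real.sqrt (2 / Real.pi) * (Φ α / α))) := by
  have hψ : ContinuousOn (fun ζ => Φ ζ / ζ ^ 2) (Ioc 0 α) :=
    hΦ.div (continuousOn_pow 2) fun ζ hζ => pow_ne_zero 2 hζ.1.ne'
  have hrepr : (fun θ => α / √Real.pi *
        ∫ t in Ioc 0 1, rescaledIntegrand α (fun ζ => Φ ζ / ζ ^ 2) θ t)
      =ᶠ[𝓝[<] 1] fun θ => kernelG α Φ θ / √(1 - θ) := by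
    filter_upwards [Ioo_mem_nhdsLT zero_lt_one] with θ hθ
    exact (kernelG_div_sqrt_eq hα Φ hθ).symm
  have hlim : α / √Real.pi * (√2 * (Φ α / α ^ 2)) = √(2 / Real.pi) * (Φ α / α) := by
    rw [Real.sqrt_div zero_le_two]
    field_simp
  rw [← hlim]
  exact ((tendsto_integral_rescaledIntegrand hα hψ).const_mul _).congr' hrepr
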